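/- arXiv:2601.07279 — 2 statements merged into one kernel-verified Lean document; each statement's English description precedes it below -/
import Mathlib

section
/- Let G=(W,E) be a finite simple graph with W nonempty and let k be a natural number. Construct the parliamentary election whose running parties are p_1 and c_2, with spoiler parties S = {s_w : w ∈ W} available for addition, and with four voters per vertex w ∈ W: one voter ranking p_1 ≻ c_2 ≻ (all remaining parties in some fixed order); one voter ranking c_2 ≻ p_1 ≻ (all remaining parties); and two voters ranking the parties {s_u : u ∈ N[w]} first (in some fixed order), then c_2, then p_1, then all remaining parties. Let the coalition be C = {p_1, c_2}, with favored party p_1 and no electoral threshold. Then G has a dominating set of size at most k if and only if there exists a set S⁺ ⊆ S with |S⁺| ≤ k such that, in the election whose running parties are {p_1, c_2} ∪ S⁺, the vote fraction of {p_1, c_2} is at least 1/2 and the vote fraction of {p_1} is at least one half of the vote fraction of {p_1, c_2}. -/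
open scoped Classical

section Defs

variable {U V : Type*}

/-- `p` is the most-preferred member of the running set `P` under the linear order `L`
(greater means more preferred). -/
def TopOf (L : LinearOrder U) (P : Finset U) (p : U) : Prop :=
  p ∈ P ∧ ∀ q ∈ P, q ≠ p → L.lt q p

/-- Number of voters whose most-preferred running party lies in `A`. -/
noncomputable def votes [Fintype V] (pref : V → LinearOrder U) (P A : Finset U) : ℕ :=
  (Finset.univ.filter fun v : V => ∃ p ∈ A, TopOf (pref v) P p).card

/-- Fraction of voters whose most-preferred running party lies in `A`. -/
noncomputable def voteFrac [Fintype V] (pref : V → LinearOrder U) (P A : Finset U) : ℚ :=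
  (votes pref P A : ℚ) / (Fintype.card V : ℚ)

/-- Total number of votes received by active parties (receiving at least `T` votes) among `A`. -/
noncomputable def activeVotes [Fintype V] (pref : V → LinearOrder U) (P : Finset U) (T : ℕ)
    (A : Finset U) : ℕ :=
  ∑ p ∈ A, if T ≤ votes pref P {p} then votes pref P {p} else 0

/-- Active-vote fraction of `A`. -/
noncomputable def activeFrac [Fintype V] (pref : V → LinearOrder U) (P : Finset U) (T : ℕ)
    (A : Finset U) : ℚ :=
  (activeVotes pref P T A : ℚ) / (activeVotes pref P T P : ℚ)

/-- The linear order `L` respects the tier function `t` (smaller tier = more preferred). -/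
def PrefTiers (L : LinearOrder U) (t : U → ℕ) : Prop :=
  ∀ a b : U, t a < t b → L.lt b a

/-- Pairs `(p, q)` with `p ≻ q` under `L` and `q ≻ p` under `L'`. -/
noncomputable def invPairs [Fintype U] (L L' : LinearOrder U) : Finset (U × U) :=
  Finset.univ.filter fun pq : U × U => L.lt pq.2 pq.1 ∧ L'.lt pq.1 pq.2

/-- Swap-bribery cost of replacing `L` by `L'` with swap-price function `sw`. -/
noncomputable def swapCost [Fintype U] (L L' : LinearOrder U) (sw : U → U → ℝ) : ℝ :=
  ∑ pq ∈ invPairs L L', sw pq.1 pq.2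

end Defs

/-!
Whatever spoilers run, the voter `(w, 0)` votes for `p₁` and `(w, 1)` for `c₂`, while the two
neighbourhood voters of `w` vote for a spoiler if one of `N[w]` runs and for `c₂` otherwise.
With `n = |W|` and `d` the number of vertices not dominated by the added spoilers, the coalition
thus gets `2n + 2d` of the `4n` votes and `p₁` gets `n`. The first condition always holds, and
the second, `2n + 2d ≤ 2n`, says exactly that the spoilers dominate `G`.
-/

section Plurality

variable {U : Type*} {L : LinearOrder U} {P : Finset U} {t : U → ℕ} {p q : U}

theorem TopOf.eq (hp : TopOf L P p) (hq : TopOf L P q) : p = q := by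
  let _ := L
  by_contra h
  exact lt_asymm (hq.2 p hp.1 h) (hp.2 q hq.1 (Ne.symm h))

theorem TopOf.exists_mem_iff (hp : TopOf L P p) (A : Finset U) :
    (∃ q ∈ A, TopOf L P q) ↔ p ∈ A :=
  ⟨fun ⟨_, hqA, hq⟩ => hq.eq hp ▸ hqA, fun hpA => ⟨p, hpA, hp⟩⟩

theorem PrefTiers.topOf (ht : PrefTiers L t) (hp : p ∈ P)
    (hlt : ∀ q ∈ P, q ≠ p → t p < t q) : TopOf L P p :=
  ⟨hp, fun q hq hne => ht p q (hlt q hq hne)⟩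

theorem PrefTiers.le_of_topOf (ht : PrefTiers L t) (hp : TopOf L P p) (hq : q ∈ P) :
    t p ≤ t q := by
  let _ := L
  by_contra! hlt
  exact lt_asymm (ht q p hlt) (hp.2 q hq (by rintro rfl; exact lt_irrefl _ hlt))

end Plurality

section Shares

variable {U : Type*}

theorem votes_prod_eq_sum_sum {W ι : Type*} [Fintype W] [Fintype ι]
    (pref : W × ι → LinearOrder U) (P A : Finset U) :
    votes pref P A = ∑ w, ∑ i, if ∃ p ∈ A, TopOf (pref (w, i)) P p then 1 else 0 := by
  rw [votes, Finset.card_filter, ← Finset.univ_product_univ, Finset.sum_product]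

variable {V : Type*} [Fintype V] [Nonempty V] (pref : V → LinearOrder U) (P : Finset U)

theorem half_le_voteFrac_iff (A : Finset U) :
    (1 : ℚ) / 2 ≤ voteFrac pref P A ↔ Fintype.card V ≤ 2 * votes pref P A := by
  have hV : (0 : ℚ) < Fintype.card V := by exact_mod_cast Fintype.card_pos
  rw [voteFrac, le_div_iff₀ hV, ← Nat.cast_le (α := ℚ)]
  push_cast
  constructor <;> intro h <;> linarith

theorem half_mul_voteFrac_le_iff (A B : Finset U) :
    (1 : ℚ) / 2 * voteFrac pref P A ≤ voteFrac pref P B ↔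
      votes pref P A ≤ 2 * votes pref P B := by
  have hV : (0 : ℚ) < Fintype.card V := by exact_mod_cast Fintype.card_pos
  rw [voteFrac, voteFrac, ← mul_div_assoc, div_le_div_iff_of_pos_right hV,
    ← Nat.cast_le (α := ℚ)]
  push_cast
  constructor <;> intro h <;> linarith

end Shares

section Reduction

variable {W : Type*} [DecidableEq W] {L : LinearOrder (W ⊕ Fin 2)} {Sp : Finset (W ⊕ Fin 2)}

def domReductionTiers (G : SimpleGraph W) [DecidableRel G.Adj] (w : W) (i : Fin 4) :
    W ⊕ Fin 2 → ℕ :=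
  if i = 0 then
    Sum.elim (fun _ => 2) (fun j : Fin 2 => if j = 0 then 0 else 1)
  else if i = 1 then
    Sum.elim (fun _ => 2) (fun j : Fin 2 => if j = 1 then 0 else 1)
  else
    Sum.elim (fun u => if u = w ∨ G.Adj w u then 0 else 3)
      (fun j : Fin 2 => if j = 1 then 1 else 2)

theorem topOf_of_prefTiers_partisan (j : Fin 2)
    (hL : PrefTiers L (Sum.elim (fun _ => (2 : ℕ)) (fun j' : Fin 2 => if j' = j then 0 else 1))) :
    TopOf L ({Sum.inr 0, Sum.inr 1} ∪ Sp) (Sum.inr j) := by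
  refine hL.topOf (by fin_cases j <;> simp) ?_
  rintro (u | j') - hne
  · simp
  · simp_all

theorem exists_mem_topOf_iff_of_prefTiers_neighbor (G : SimpleGraph W) [DecidableRel G.Adj]
    (w : W) (S : Finset W)
    (hL : PrefTiers L (Sum.elim (fun u => if u = w ∨ G.Adj w u then (0 : ℕ) else 3)
      (fun j : Fin 2 => if j = 1 then 1 else 2)))
    {A : Finset (W ⊕ Fin 2)} (hA : ∀ u, Sum.inl u ∉ A) :
    (∃ p ∈ A, TopOf L ({Sum.inr 0, Sum.inr 1} ∪ S.image Sum.inl) p) ↔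
      Sum.inr 1 ∈ A ∧ ¬ ∃ u ∈ S, u = w ∨ G.Adj w u := by
  by_cases hdom : ∃ u ∈ S, u = w ∨ G.Adj w u
  · -- a running spoiler of `N[w]` has tier `0`, so the top party is a spoiler
    obtain ⟨u, huS, huw⟩ := hdom
    refine iff_of_false ?_ fun h => h.2 ⟨u, huS, huw⟩
    rintro ⟨p, hpA, hp⟩
    have := hL.le_of_topOf hp (q := Sum.inl u) (by simp [huS])
    rcases p with u' | j
    · exact hA u' hpA
    · fin_cases j <;> simp [huw] at this
  · have htop : TopOf L ({Sum.inr 0, Sum.inr 1} ∪ S.image Sum.inl) (Sum.inr 1) := by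
      refine hL.topOf (by simp) ?_
      rintro (u | j) hq hne
      · have hu : u ∈ S := by simpa using hq
        have hfar : ¬(u = w ∨ G.Adj w u) := fun h => hdom ⟨u, hu, h⟩
        simp [hfar]
      · fin_cases j <;> simp_all
    rw [htop.exists_mem_iff]
    exact (and_iff_left hdom).symm

variable [Fintype W] (G : SimpleGraph W) [DecidableRel G.Adj]
  {pref : W × Fin 4 → LinearOrder (W ⊕ Fin 2)} (S : Finset W)

theorem votes_domReduction
    (hpref : ∀ w i, PrefTiers (pref (w, i)) (domReductionTiers G w i))
    {A : Finset (W ⊕ Fin 2)} (hA : ∀ u, Sum.inl u ∉ A) :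
    votes pref ({Sum.inr 0, Sum.inr 1} ∪ S.image Sum.inl) A =
      ∑ w : W, ((if Sum.inr 0 ∈ A then 1 else 0) + (if Sum.inr 1 ∈ A then 1 else 0) +
        2 * if Sum.inr 1 ∈ A ∧ ¬ ∃ u ∈ S, u = w ∨ G.Adj w u then 1 else 0) := by
  rw [votes_prod_eq_sum_sum]
  refine Finset.sum_congr rfl fun w _ => ?_
  simp only [Fin.sum_univ_four, (topOf_of_prefTiers_partisan 0 (hpref w 0)).exists_mem_iff,
    (topOf_of_prefTiers_partisan 1 (hpref w 1)).exists_mem_iff,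
    exists_mem_topOf_iff_of_prefTiers_neighbor G w S (hpref w 2) hA,
    exists_mem_topOf_iff_of_prefTiers_neighbor G w S (hpref w 3) hA]
  ring

theorem votes_domReduction_favored
    (hpref : ∀ w i, PrefTiers (pref (w, i)) (domReductionTiers G w i)) :
    votes pref ({Sum.inr 0, Sum.inr 1} ∪ S.image Sum.inl) {Sum.inr 0} = Fintype.card W := by
  rw [votes_domReduction G S hpref (by simp)]
  simp

theorem votes_domReduction_coalition
    (hpref : ∀ w i, PrefTiers (pref (w, i)) (domReductionTiers G w i)) :
    votes pref ({Sum.inr 0, Sum.inr 1} ∪ S.image Sum.inl) {Sum.inr 0, Sum.inr 1} =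
      2 * Fintype.card W +
        2 * (Finset.univ.filter fun w => ¬ ∃ u ∈ S, u = w ∨ G.Adj w u).card := by
  rw [votes_domReduction G S hpref (by simp), Finset.card_filter, Finset.mul_sum,
    Fintype.card_eq_sum_ones, Finset.mul_sum, ← Finset.sum_add_distrib]
  refine Finset.sum_congr rfl fun w _ => ?_
  simp

theorem domReduction_conditions_iff [Nonempty W]
    (hpref : ∀ w i, PrefTiers (pref (w, i)) (domReductionTiers G w i)) :
    let P : Finset (W ⊕ Fin 2) := {Sum.inr 0, Sum.inr 1} ∪ S.image Sum.inl
    ((1 : ℚ) / 2 ≤ voteFrac pref P {Sum.inr 0, Sum.inr 1} ∧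
      (1 : ℚ) / 2 * voteFrac pref P {Sum.inr 0, Sum.inr 1} ≤ voteFrac pref P {Sum.inr 0}) ↔
      ∀ w, ∃ u ∈ S, u = w ∨ G.Adj u w := by
  intro P
  have hundominated : (Finset.univ.filter fun w => ¬ ∃ u ∈ S, u = w ∨ G.Adj w u).card = 0 ↔
      ∀ w, ∃ u ∈ S, u = w ∨ G.Adj u w := by
    simp only [Finset.card_eq_zero, Finset.filter_eq_empty_iff, Finset.mem_univ, true_implies,
      not_not, G.adj_comm]
  rw [half_le_voteFrac_iff, half_mul_voteFrac_le_iff, votes_domReduction_favored G S hpref,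
    votes_domReduction_coalition G S hpref, Fintype.card_prod, Fintype.card_fin, ← hundominated]
  omega

end Reduction

/-- Election (adding opposition parties, J+F objective, no threshold):
running parties $p_1$ (= `Sum.inr 0`) and $c_2$ (= `Sum.inr 1`); spoilers
$s_w$ (= `Sum.inl w`).  Per vertex $w$: one voter ranks $p_1 ≻ c_2 ≻$ rest, one ranks
$c_2 ≻ p_1 ≻$ rest, and two rank $\{s_u : u ∈ N[w]\}$ first, then $c_2$, then $p_1$, then
the rest.  The coalition is $\{p_1, c_2\}$ with favored party $p_1$.  Then $G$ has a
dominating set of size at most $k$ iff at most $k$ spoilers can be added so that the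
coalition's vote fraction is at least $1/2$ and $p_1$'s vote fraction is at least half of
the coalition's. -/
theorem aop_JF_dominating_set_reduction
    {W : Type*} [Fintype W] [DecidableEq W] [Nonempty W]
    (G : SimpleGraph W) [DecidableRel G.Adj] (k : ℕ)
    (pref : W × Fin 4 → LinearOrder (W ⊕ Fin 2))
    (hpref : ∀ (w : W) (i : Fin 4), PrefTiers (pref (w, i))
      (if i = 0 then
        Sum.elim (fun _ => (2 : ℕ)) (fun j : Fin 2 => if j = 0 then 0 else 1)
      else if i = 1 then
        Sum.elim (fun _ => (2 : ℕ)) (fun j : Fin 2 => if j = 1 then 0 else 1)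
      else
        Sum.elim (fun u => if u = w ∨ G.Adj w u then (0 : ℕ) else 3)
          (fun j : Fin 2 => if j = 1 then 1 else 2))) :
    (∃ W' : Finset W, W'.card ≤ k ∧ ∀ w : W, ∃ u ∈ W', u = w ∨ G.Adj u w) ↔
    (∃ Sp : Finset (W ⊕ Fin 2), Sp ⊆ Finset.univ.image Sum.inl ∧ Sp.card ≤ k ∧
      (1 : ℚ) / 2 ≤ voteFrac pref ({Sum.inr 0, Sum.inr 1} ∪ Sp) {Sum.inr 0, Sum.inr 1} ∧
      (1 : ℚ) / 2 * voteFrac pref ({Sum.inr 0, Sum.inr 1} ∪ Sp) {Sum.inr 0, Sum.inr 1} ≤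
        voteFrac pref ({Sum.inr 0, Sum.inr 1} ∪ Sp) {Sum.inr 0}) := by
  have hcard (S : Finset W) : (S.image Sum.inl : Finset (W ⊕ Fin 2)).card = S.card :=
    Finset.card_image_of_injective S Sum.inl_injective
  constructor
  · rintro ⟨S, hk, hdom⟩
    exact ⟨S.image Sum.inl, Finset.image_subset_image S.subset_univ, (hcard S).trans_le hk,
      (domReduction_conditions_iff G S hpref).2 hdom⟩
  · rintro ⟨Sp, hSp, hk, hcond⟩
    obtain ⟨S, -, rfl⟩ := Finset.subset_image_iff.1 hSp
    exact ⟨S, hcard S ▸ hk, (domReduction_conditions_iff G S hpref).1 hcond⟩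
end

section
/- Let E=(P,V,≻) be a parliamentary election with no electoral threshold, C ⊆ P a coalition with favored party p_1 ∈ C, nonnegative swap-price functions sw_i for each voter i, a budget B ≥ 0, and targets φ ∈ (0,1] and ρ ∈ [0,1]. For a voter i and a nonempty set g ⊆ P, let m_i(g) denote the minimum over p ∈ g of Σ_{q : q ≻_i p} sw_i(q,p) (the least swap cost of bringing some member of g to the top of voter i's order). Then there exists a swap bribe of total cost at most B after which the vote fraction of C is at least φ and the vote fraction of {p_1} is at least ρ times the vote fraction of C, if and only if there exists a function α assigning to each voter one of the nonempty sets among {p_1}, C ∖ {p_1}, and P ∖ C, such that Σ_{i∈V} m_i(α(i)) ≤ B, the number of voters assigned to {p_1} or C ∖ {p_1} is at least φ·|V|, and the number of voters assigned to {p_1} is at least ρ times the number of voters assigned to {p_1} or C ∖ {p_1}. -/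
open scoped Classical

section Stmt11

variable {U : Type*} [Fintype U]

/-- Cost of lifting party $p$ to the top of the order $L$:  $Σ_{q ≻ p} sw(q,p)$. -/
noncomputable def liftCost (L : LinearOrder U) (sw : U → U → ℝ) (p : U) : ℝ :=
  ∑ q ∈ Finset.univ.filter fun q : U => L.lt p q, sw q p

/-- $m_i(g)$: least swap cost of bringing some member of the (nonempty) set $g$ to the top. -/
noncomputable def minLiftCost (L : LinearOrder U) (sw : U → U → ℝ) (g : Finset U) : ℝ :=
  if h : g.Nonempty then (g.image (liftCost L sw)).min' (h.image _) else 0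

end Stmt11

/-!
Only the new top party of each voter matters for the targets. Making `p` the top of `L` forces
every pair `(q, p)` with `q` above `p` to be inverted, so it costs at least `liftCost L sw p`, and
moving `p` straight to the top costs exactly that. Hence an optimal bribe moves one party per voter
to the top, and since the targets only see whether that party is `p1`, lies in `C \ {p1}` or lies
outside `C`, it may as well be the cheapest party of its group, at cost `minLiftCost`.
-/

open Finset

section Tops

variable {U : Type*}

lemma TopOf.unique {L : LinearOrder U} {P : Finset U} {p q : U}
    (hp : TopOf L P p) (hq : TopOf L P q) : p = q := by
  by_contra hne
  let _ := L
  exact lt_asymm (hq.2 p hp.1 hne) (hp.2 q hq.1 (Ne.symm hne))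

lemma exists_topOf (L : LinearOrder U) {P : Finset U} (hP : P.Nonempty) :
    ∃ p, TopOf L P p := by
  let _ := L
  exact ⟨P.max' hP, P.max'_mem hP, fun q hq hne => lt_of_le_of_ne (P.le_max' q hq) hne⟩

/-- The order obtained from `L` by moving `p` to the top, keeping the other parties in place. -/
@[reducible]
noncomputable def moveTop (L : LinearOrder U) (p : U) : LinearOrder U :=
  letI := L
  LinearOrder.lift' (fun a : U => toLex (decide (a = p), a))
    (fun _ _ h => congrArg (fun x : Lex (Bool × U) => (ofLex x).2) h)

lemma moveTop_lt_iff (L : LinearOrder U) (p a b : U) :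
    (moveTop L p).lt a b ↔ (a ≠ p ∧ b = p) ∨ ((a = p ↔ b = p) ∧ L.lt a b) := by
  let _ := L
  show toLex (decide (a = p), a) < toLex (decide (b = p), b) ↔ _
  simp [Prod.Lex.lt_iff, Bool.lt_iff, decide_eq_decide]

end Tops

section Votes

variable {U V : Type*} [Fintype V] {pref : V → LinearOrder U} {P : Finset U}

lemma votes_eq_card_filter {t : V → U} (ht : ∀ v, TopOf (pref v) P (t v)) (A : Finset U) :
    votes pref P A = #{v | t v ∈ A} := by
  refine congrArg card (filter_congr fun v _ => ⟨?_, fun h => ⟨t v, h, ht v⟩⟩)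
  rintro ⟨p, hpA, hp⟩
  rwa [hp.unique (ht v)] at hpA

variable [Nonempty V]

lemma le_voteFrac_iff (A : Finset U) (φ : ℚ) :
    φ ≤ voteFrac pref P A ↔ φ * Fintype.card V ≤ votes pref P A :=
  le_div_iff₀ (by positivity)

lemma mul_voteFrac_le_voteFrac_iff (A A' : Finset U) (ρ : ℚ) :
    ρ * voteFrac pref P A ≤ voteFrac pref P A' ↔ ρ * votes pref P A ≤ votes pref P A' := by
  rw [voteFrac, voteFrac, ← mul_div_assoc, div_le_div_iff_of_pos_right (by positivity)]

end Votes

section Lift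

variable {U : Type*} [Fintype U]

/-- The pairs `(q, p)` whose order must be reversed to bring `p` to the top of `L`. -/
noncomputable def liftPairs (L : LinearOrder U) (p : U) : Finset (U × U) :=
  (univ.filter fun q => L.lt p q).map (Function.Embedding.sectL U p)

lemma liftCost_eq_sum_liftPairs (L : LinearOrder U) (sw : U → U → ℝ) (p : U) :
    liftCost L sw p = ∑ pq ∈ liftPairs L p, sw pq.1 pq.2 := by
  rw [liftPairs, sum_map]
  rfl

lemma liftPairs_subset_invPairs {L L' : LinearOrder U} {p : U} (hp : TopOf L' univ p) :
    liftPairs L p ⊆ invPairs L L' := by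
  intro pq hpq
  obtain ⟨q, hq, rfl⟩ := mem_map.1 hpq
  simp only [mem_filter, mem_univ, true_and] at hq
  refine mem_filter.2 ⟨mem_univ _, hq, hp.2 q (mem_univ q) ?_⟩
  rintro rfl
  exact (letI := L; lt_irrefl q hq)

lemma liftCost_le_swapCost {L L' : LinearOrder U} {sw : U → U → ℝ} (hsw : ∀ a b, 0 ≤ sw a b)
    {p : U} (hp : TopOf L' univ p) : liftCost L sw p ≤ swapCost L L' sw := by
  rw [liftCost_eq_sum_liftPairs, swapCost]
  exact sum_le_sum_of_subset_of_nonneg (liftPairs_subset_invPairs hp) fun _ _ _ => hsw _ _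

lemma topOf_moveTop (L : LinearOrder U) (p : U) : TopOf (moveTop L p) univ p :=
  ⟨mem_univ p, fun _ _ hq => (moveTop_lt_iff L p _ _).2 (Or.inl ⟨hq, rfl⟩)⟩

lemma invPairs_moveTop (L : LinearOrder U) (p : U) : invPairs L (moveTop L p) = liftPairs L p := by
  refine Subset.antisymm ?_ (liftPairs_subset_invPairs (topOf_moveTop L p))
  rintro ⟨a, b⟩ hab
  simp only [invPairs, mem_filter, mem_univ, true_and] at hab
  obtain ⟨hba, hab⟩ := hab
  rcases (moveTop_lt_iff L p a b).1 hab with ⟨-, rfl⟩ | ⟨-, hab⟩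
  · exact mem_map.2 ⟨a, mem_filter.2 ⟨mem_univ a, hba⟩, rfl⟩
  · exact absurd hba (letI := L; asymm hab)

lemma swapCost_moveTop (L : LinearOrder U) (sw : U → U → ℝ) (p : U) :
    swapCost L (moveTop L p) sw = liftCost L sw p := by
  rw [swapCost, invPairs_moveTop, liftCost_eq_sum_liftPairs]

lemma minLiftCost_le_liftCost (L : LinearOrder U) (sw : U → U → ℝ) {g : Finset U} {p : U}
    (hp : p ∈ g) : minLiftCost L sw g ≤ liftCost L sw p := by
  rw [minLiftCost, dif_pos ⟨p, hp⟩]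
  exact min'_le _ _ (mem_image_of_mem _ hp)

lemma exists_liftCost_eq_minLiftCost (L : LinearOrder U) (sw : U → U → ℝ) {g : Finset U}
    (hg : g.Nonempty) : ∃ p ∈ g, liftCost L sw p = minLiftCost L sw g := by
  rw [minLiftCost, dif_pos hg]
  exact mem_image.1 (min'_mem _ _)

end Lift

section PartyGroup

variable {U : Type*} [Fintype U] (C : Finset U) (p1 : U)

noncomputable def partyGroup (p : U) : Finset U :=
  if p = p1 then {p1} else if p ∈ C then C \ {p1} else univ \ C

def IsPartyGroup (g : Finset U) : Prop :=
  g = {p1} ∨ (g = C \ {p1} ∧ (C \ {p1}).Nonempty) ∨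
    (g = univ \ C ∧ (univ \ C : Finset U).Nonempty)

variable {C p1}

lemma IsPartyGroup.nonempty {g : Finset U} (hg : IsPartyGroup C p1 g) : g.Nonempty := by
  rcases hg with rfl | ⟨rfl, hne⟩ | ⟨rfl, hne⟩
  exacts [singleton_nonempty p1, hne, hne]

lemma mem_partyGroup (p : U) : p ∈ partyGroup C p1 p := by
  unfold partyGroup
  split_ifs <;> simp_all

lemma isPartyGroup_partyGroup (p : U) : IsPartyGroup C p1 (partyGroup C p1 p) := by
  have hp := mem_partyGroup (C := C) (p1 := p1) p
  unfold partyGroup at hp ⊢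
  split_ifs at hp ⊢
  · exact Or.inl rfl
  · exact Or.inr (Or.inl ⟨rfl, p, hp⟩)
  · exact Or.inr (Or.inr ⟨rfl, p, hp⟩)

lemma partyGroup_eq_of_mem (hp1 : p1 ∈ C) {g : Finset U} (hg : IsPartyGroup C p1 g) {p : U}
    (hp : p ∈ g) : partyGroup C p1 p = g := by
  rcases hg with rfl | ⟨rfl, -⟩ | ⟨rfl, -⟩
  · rw [mem_singleton.1 hp, partyGroup, if_pos rfl]
  · obtain ⟨hpC, hp⟩ := mem_sdiff.1 hp
    rw [partyGroup, if_neg (notMem_singleton.1 hp), if_pos hpC]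
  · have hpC := (mem_sdiff.1 hp).2
    rw [partyGroup, if_neg (ne_of_mem_of_not_mem hp1 hpC).symm, if_neg hpC]

lemma partyGroup_eq_singleton_iff {p : U} : partyGroup C p1 p = {p1} ↔ p = p1 :=
  ⟨fun h => mem_singleton.1 (h ▸ mem_partyGroup p), fun h => if_pos h⟩

lemma partyGroup_eq_singleton_or_eq_sdiff_iff (hp1 : p1 ∈ C) {p : U} :
    partyGroup C p1 p = {p1} ∨ partyGroup C p1 p = C \ {p1} ↔ p ∈ C := by
  constructor
  · rintro (h | h)
    · rwa [partyGroup_eq_singleton_iff.1 h]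
    · exact (mem_sdiff.1 (h ▸ mem_partyGroup p)).1
  · intro hp
    by_cases h : p = p1
    · exact Or.inl (partyGroup_eq_singleton_iff.2 h)
    · exact Or.inr (by simp [partyGroup, h, hp])

lemma voteFrac_targets_iff_of_topOf {V : Type*} [Fintype V] [Nonempty V] (hp1 : p1 ∈ C)
    {pref : V → LinearOrder U} {t : V → U} {α : V → Finset U}
    (ht : ∀ i, TopOf (pref i) univ (t i)) (hα : ∀ i, IsPartyGroup C p1 (α i))
    (hmem : ∀ i, t i ∈ α i) (φ ρ : ℚ) :
    (φ ≤ voteFrac pref univ C ∧ ρ * voteFrac pref univ C ≤ voteFrac pref univ {p1}) ↔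
      (φ * Fintype.card V ≤ (#{i | α i = {p1} ∨ α i = C \ {p1}} : ℚ) ∧
        ρ * (#{i | α i = {p1} ∨ α i = C \ {p1}} : ℚ) ≤ #{i | α i = {p1}}) := by
  obtain rfl : α = fun i => partyGroup C p1 (t i) :=
    funext fun i => (partyGroup_eq_of_mem hp1 (hα i) (hmem i)).symm
  rw [le_voteFrac_iff, mul_voteFrac_le_voteFrac_iff, votes_eq_card_filter ht,
    votes_eq_card_filter ht]
  simp_rw [partyGroup_eq_singleton_or_eq_sdiff_iff hp1, partyGroup_eq_singleton_iff,
    mem_singleton]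

end PartyGroup

section Stmt11

variable {U : Type*} [Fintype U]

theorem swap_bribery_characterization_general
    {V : Type*} [Fintype V] [Nonempty V] [Nonempty U]
    (pref : V → LinearOrder U) (C : Finset U) (p1 : U) (hp1 : p1 ∈ C)
    (sw : V → U → U → ℝ) (hsw : ∀ i a b, 0 ≤ sw i a b)
    (B : ℝ) (φ ρ : ℚ) :
    (∃ pref' : V → LinearOrder U,
        (∑ i : V, swapCost (pref i) (pref' i) (sw i)) ≤ B ∧
        φ ≤ voteFrac pref' Finset.univ C ∧
        ρ * voteFrac pref' Finset.univ C ≤ voteFrac pref' Finset.univ {p1}) ↔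
      (∃ α : V → Finset U,
        (∀ i : V, α i = {p1} ∨
          (α i = C \ {p1} ∧ (C \ {p1}).Nonempty) ∨
          (α i = Finset.univ \ C ∧ (Finset.univ \ C : Finset U).Nonempty)) ∧
        (∑ i : V, minLiftCost (pref i) (sw i) (α i)) ≤ B ∧
        φ * (Fintype.card V : ℚ) ≤
          ((Finset.univ.filter fun i : V => α i = {p1} ∨ α i = C \ {p1}).card : ℚ) ∧
        ρ * ((Finset.univ.filter fun i : V => α i = {p1} ∨ α i = C \ {p1}).card : ℚ) ≤
          ((Finset.univ.filter fun i : V => α i = {p1}).card : ℚ)) := by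
  constructor
  · rintro ⟨pref', hcost, htargets⟩
    choose t ht using fun i => exists_topOf (pref' i) (univ_nonempty (α := U))
    refine ⟨fun i => partyGroup C p1 (t i), fun i => isPartyGroup_partyGroup (t i), ?_,
      (voteFrac_targets_iff_of_topOf hp1 ht (fun i => isPartyGroup_partyGroup (t i))
        (fun i => mem_partyGroup (t i)) φ ρ).1 htargets⟩
    refine (sum_le_sum fun i _ => ?_).trans hcost
    exact (minLiftCost_le_liftCost _ _ (mem_partyGroup _)).trans
      (liftCost_le_swapCost (hsw i) (ht i))
  · rintro ⟨α, hα, hcost, hcounts⟩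
    choose c hc hcost_eq using fun i =>
      exists_liftCost_eq_minLiftCost (pref i) (sw i) (IsPartyGroup.nonempty (hα i))
    refine ⟨fun i => moveTop (pref i) (c i), ?_,
      (voteFrac_targets_iff_of_topOf hp1 (fun i => topOf_moveTop _ _) hα hc φ ρ).2 hcounts⟩
    simpa only [swapCost_moveTop, hcost_eq] using hcost

/-- With no electoral threshold, a swap bribe of cost at most $B$ achieving
the J+F objective exists iff there is an assignment of voters to the nonempty sets among
$\{p_1\}$, $C ∖ \{p_1\}$, $P ∖ C$ of total min-lift cost at most $B$ with the right counts. -/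
theorem swap_bribery_characterization
    {V : Type*} [Fintype V] [Nonempty V] [Nonempty U]
    (pref : V → LinearOrder U) (C : Finset U) (p1 : U) (hp1 : p1 ∈ C)
    (sw : V → U → U → ℝ) (hsw : ∀ i a b, 0 ≤ sw i a b)
    (B : ℝ) (hB : 0 ≤ B) (φ ρ : ℚ) (hφ0 : 0 < φ) (hφ1 : φ ≤ 1) (hρ0 : 0 ≤ ρ) (hρ1 : ρ ≤ 1) :
    (∃ pref' : V → LinearOrder U,
        (∑ i : V, swapCost (pref i) (pref' i) (sw i)) ≤ B ∧
        φ ≤ voteFrac pref' Finset.univ C ∧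
        ρ * voteFrac pref' Finset.univ C ≤ voteFrac pref' Finset.univ {p1}) ↔
      (∃ α : V → Finset U,
        (∀ i : V, α i = {p1} ∨
          (α i = C \ {p1} ∧ (C \ {p1}).Nonempty) ∨
          (α i = Finset.univ \ C ∧ (Finset.univ \ C : Finset U).Nonempty)) ∧
        (∑ i : V, minLiftCost (pref i) (sw i) (α i)) ≤ B ∧
        φ * (Fintype.card V : ℚ) ≤
          ((Finset.univ.filter fun i : V => α i = {p1} ∨ α i = C \ {p1}).card : ℚ) ∧
        ρ * ((Finset.univ.filter fun i : V => α i = {p1} ∨ α i = C \ {p1}).card : ℚ) ≤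
          ((Finset.univ.filter fun i : V => α i = {p1}).card : ℚ)) :=
  swap_bribery_characterization_general pref C p1 hp1 sw hsw B φ ρ

end Stmt11
end
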